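/- Let M and N be connected one-dimensional complex manifolds (charted spaces over ℂ with holomorphic transition maps, i.e., IsManifold 𝓘(ℂ,ℂ)), both Hausdorff, with M compact and nonempty. If f : M → N is holomorphic (MDifferentiable with respect to 𝓘(ℂ,ℂ)) and nonconstant, then f is surjective; in particular N is compact. -/

import Mathlib

open scoped Manifold

open Filter Topology Set Function

/-!
Read in charts, a holomorphic map between Riemann surfaces is an analytic function of one
variable, so by the open mapping theorem it is, near each point, either constant or open. By the
identity theorem the set of points near which `f` is constant is closed as well as open, so on the
connected surface `M` the map `f` is either constant or open. In the second case `f(M)` is open and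
compact, hence clopen in the connected Hausdorff surface `N`, so `f(M) = N`.
-/

theorem isOpen_setOf_eventually_eq {X Y : Type*} [TopologicalSpace X] (f : X → Y) :
    IsOpen {x | ∀ᶠ y in 𝓝 x, f y = f x} :=
  isOpen_iff_mem_nhds.2 fun _ hx =>
    (hx.and hx.eventually_nhds).mono fun _ ⟨hy, hy'⟩ => hy'.mono fun _ hw => hw.trans hy.symm

theorem IsOpenMap.surjective_of_compactSpace {X Y : Type*} [TopologicalSpace X]
    [TopologicalSpace Y] [CompactSpace X] [Nonempty X] [T2Space Y] [PreconnectedSpace Y]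
    {f : X → Y} (hf : IsOpenMap f) (hc : Continuous f) : Surjective f :=
  range_eq_univ.1 <|
    IsClopen.eq_univ ⟨(isCompact_range hc).isClosed, hf.isOpen_range⟩ (range_nonempty f)

theorem AnalyticAt.eventually_eq_of_frequently_eventually_eq {E F : Type*}
    [NormedAddCommGroup E] [NormedSpace ℂ E]
    [NormedAddCommGroup F] [NormedSpace ℂ F] [CompleteSpace F]
    {g : E → F} {z₀ : E} (hg : AnalyticAt ℂ g z₀) (h : ∃ᶠ z in 𝓝 z₀, ∀ᶠ w in 𝓝 z, g w = g z) :
    ∀ᶠ w in 𝓝 z₀, g w = g z₀ := by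
  obtain ⟨r, hr, hball⟩ := hg.exists_ball_analyticOnNhd
  obtain ⟨z, hgz, hz⟩ := (h.and_eventually (Metric.ball_mem_nhds z₀ hr)).exists
  have hconst : EqOn g (fun _ => g z) (Metric.ball z₀ r) :=
    hball.eqOn_of_preconnected_of_eventuallyEq analyticOnNhd_const
      (convex_ball z₀ r).isPreconnected hz hgz
  filter_upwards [Metric.ball_mem_nhds z₀ hr] with w hw
  rw [hconst hw, hconst (Metric.mem_ball_self hr)]

namespace OpenPartialHomeomorph

variable {X Y E F : Type*} [TopologicalSpace X] [TopologicalSpace Y] [TopologicalSpace E]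
  [TopologicalSpace F] {φ : OpenPartialHomeomorph X E} {ψ : OpenPartialHomeomorph Y F}
  {f : X → Y} {y : X}

theorem map_nhds_comp_symm (hy : y ∈ φ.source) :
    map (ψ ∘ f ∘ φ.symm) (𝓝 (φ y)) = map ψ (map f (𝓝 y)) := by
  rw [map_map, ← comp_assoc, ← map_map, φ.symm_map_nhds_eq hy]

theorem eventually_comp_symm_eq_iff (hy : y ∈ φ.source) (hfy : f y ∈ ψ.source)
    (hf : ContinuousAt f y) :
    (∀ᶠ z in 𝓝 (φ y), (ψ ∘ f ∘ φ.symm) z = (ψ ∘ f ∘ φ.symm) (φ y)) ↔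
      ∀ᶠ w in 𝓝 y, f w = f y := by
  simp only [← tendsto_pure, Tendsto]
  rw [map_nhds_comp_symm hy, comp_apply, comp_apply, φ.left_inv hy, ← map_pure]
  exact map_le_map_iff_of_injOn (hf (ψ.open_source.mem_nhds hfy)) hfy ψ.injOn

theorem nhds_le_map_nhds_of_comp_symm (hy : y ∈ φ.source) (hfy : f y ∈ ψ.source)
    (hf : ContinuousAt f y)
    (h : 𝓝 ((ψ ∘ f ∘ φ.symm) (φ y)) ≤ map (ψ ∘ f ∘ φ.symm) (𝓝 (φ y))) :
    𝓝 (f y) ≤ map f (𝓝 y) := by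
  rwa [map_nhds_comp_symm hy, comp_apply, comp_apply, φ.left_inv hy, ← ψ.map_nhds_eq hfy,
    map_le_map_iff_of_injOn (ψ.open_source.mem_nhds hfy) (hf (ψ.open_source.mem_nhds hfy))
      ψ.injOn] at h

end OpenPartialHomeomorph

namespace MDifferentiable

variable {M N : Type*} [TopologicalSpace M] [ChartedSpace ℂ M] [IsManifold 𝓘(ℂ, ℂ) 1 M]
  [TopologicalSpace N] [ChartedSpace ℂ N] [IsManifold 𝓘(ℂ, ℂ) 1 N] {f : M → N}

theorem analyticAt_chartAt_comp (hf : MDifferentiable 𝓘(ℂ, ℂ) 𝓘(ℂ, ℂ) f) (x : M) :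
    AnalyticAt ℂ (chartAt ℂ (f x) ∘ f ∘ (chartAt ℂ x).symm) (chartAt ℂ x x) := by
  have hd := (mdifferentiableOn_iff.1 (hf.mdifferentiableOn (s := univ))).2 x (f x)
  simp only [mfld_simps] at hd
  have hx := mem_chart_source ℂ x
  have hpre : (chartAt ℂ x).symm ⁻¹' (f ⁻¹' (chartAt ℂ (f x)).source) ∈ 𝓝 (chartAt ℂ x x) := by
    rw [← mem_map, (chartAt ℂ x).symm_map_nhds_eq hx]
    exact hf.continuous.continuousAt.preimage_mem_nhds (chart_source_mem_nhds ℂ (f x))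
  exact hd.analyticAt (inter_mem (chart_target_mem_nhds ℂ x) hpre)

theorem eventually_constant_or_nhds_le_map_nhds (hf : MDifferentiable 𝓘(ℂ, ℂ) 𝓘(ℂ, ℂ) f)
    (x : M) : (∀ᶠ y in 𝓝 x, f y = f x) ∨ 𝓝 (f x) ≤ map f (𝓝 x) := by
  have hx := mem_chart_source ℂ x
  have hfx := mem_chart_source ℂ (f x)
  exact (hf.analyticAt_chartAt_comp x).eventually_constant_or_nhds_le_map_nhds.imp
    (OpenPartialHomeomorph.eventually_comp_symm_eq_iff hx hfx (hf x).continuousAt).1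
    (OpenPartialHomeomorph.nhds_le_map_nhds_of_comp_symm hx hfx (hf x).continuousAt)

theorem isClosed_setOf_eventually_eq (hf : MDifferentiable 𝓘(ℂ, ℂ) 𝓘(ℂ, ℂ) f) :
    IsClosed {x | ∀ᶠ y in 𝓝 x, f y = f x} := by
  refine isClosed_iff_frequently.2 fun x hx => ?_
  set φ := chartAt ℂ x
  set ψ := chartAt ℂ (f x)
  have hnear : φ.source ∩ f ⁻¹' ψ.source ∈ 𝓝 x :=
    inter_mem (chart_source_mem_nhds ℂ x)
      ((hf x).continuousAt.preimage_mem_nhds (chart_source_mem_nhds ℂ (f x)))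
  have hchart : ∃ᶠ z in 𝓝 (φ x), ∀ᶠ w in 𝓝 z, (ψ ∘ f ∘ φ.symm) w = (ψ ∘ f ∘ φ.symm) z := by
    rw [← φ.map_nhds_eq (mem_chart_source ℂ x), frequently_map]
    exact (hx.and_eventually hnear).mono fun y ⟨hy, hyφ, hyψ⟩ =>
      (OpenPartialHomeomorph.eventually_comp_symm_eq_iff hyφ hyψ (hf y).continuousAt).2 hy
  exact (OpenPartialHomeomorph.eventually_comp_symm_eq_iff (mem_chart_source ℂ x)
    (mem_chart_source ℂ (f x)) (hf x).continuousAt).1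
      ((hf.analyticAt_chartAt_comp x).eventually_eq_of_frequently_eventually_eq hchart)

theorem isOpenMap_or_forall_eq [PreconnectedSpace M] (hf : MDifferentiable 𝓘(ℂ, ℂ) 𝓘(ℂ, ℂ) f) :
    IsOpenMap f ∨ ∀ x y, f x = f y := by
  have hS : IsClopen {x | ∀ᶠ y in 𝓝 x, f y = f x} :=
    ⟨hf.isClosed_setOf_eventually_eq, isOpen_setOf_eventually_eq f⟩
  refine (isClopen_iff.1 hS).imp (fun h => ?_) (fun h => ?_)
  · exact isOpenMap_iff_nhds_le.2 fun x =>
      (hf.eventually_constant_or_nhds_le_map_nhds x).resolve_left fun hx => h.subset hx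
  · exact (IsLocallyConstant.iff_eventually_eq f).2 (fun x => h.symm.subset (mem_univ x))
      |>.apply_eq_of_preconnectedSpace

end MDifferentiable

theorem stmt4_general
    {M : Type*} [TopologicalSpace M] [ChartedSpace ℂ M]
    [IsManifold 𝓘(ℂ, ℂ) (⊤ : ℕ∞) M]
    [CompactSpace M] [ConnectedSpace M]
    {N : Type*} [TopologicalSpace N] [ChartedSpace ℂ N]
    [IsManifold 𝓘(ℂ, ℂ) (⊤ : ℕ∞) N] [T2Space N] [ConnectedSpace N]
    (f : M → N) (hf : MDifferentiable 𝓘(ℂ, ℂ) 𝓘(ℂ, ℂ) f)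
    (hnc : ¬∃ c : N, ∀ x : M, f x = c) :
    Function.Surjective f ∧ CompactSpace N := by
  obtain hopen | hconst := hf.isOpenMap_or_forall_eq
  · have hsurj := hopen.surjective_of_compactSpace hf.continuous
    exact ⟨hsurj, hsurj.compactSpace hf.continuous⟩
  · exact absurd ⟨f (Classical.arbitrary M), fun x => hconst x _⟩ hnc

/-- A nonconstant holomorphic map from a nonempty compact connected Riemann surface to a
connected Riemann surface is surjective; in particular the target is compact. -/
theorem stmt4
    {M : Type*} [TopologicalSpace M] [ChartedSpace ℂ M]
    [IsManifold 𝓘(ℂ, ℂ) (⊤ : ℕ∞) M] [T2Space M]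
    [CompactSpace M] [ConnectedSpace M] [Nonempty M]
    {N : Type*} [TopologicalSpace N] [ChartedSpace ℂ N]
    [IsManifold 𝓘(ℂ, ℂ) (⊤ : ℕ∞) N] [T2Space N] [ConnectedSpace N]
    (f : M → N) (hf : MDifferentiable 𝓘(ℂ, ℂ) 𝓘(ℂ, ℂ) f)
    (hnc : ¬∃ c : N, ∀ x : M, f x = c) :
    Function.Surjective f ∧ CompactSpace N :=
  stmt4_general f hf hnc
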